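/- Let V be a finite Borel measure on (0,∞). Then for every δ with 0 < δ < min(𝓛_V(0), 1)/2 one has τ_V(2δ) ≤ T_V(δ) ≤ (6/δ²)·τ_V(δ/2). -/

import Mathlib

open MeasureTheory Filter Set Topology

/-- The Laplace transform `𝓛_V(t) = ∫_{(0,∞)} e^{-tλ} dV(λ)` of a (finite Borel) measure `V`
on `(0,∞)`. -/
noncomputable def lap (V : Measure ℝ) (t : ℝ) : ℝ :=
  ∫ x in Ioi (0 : ℝ), Real.exp (-t * x) ∂V

/-- `V(λ) = V((0,λ])`, the nondecreasing right-continuous function associated to `V`. -/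
noncomputable def cdfV (V : Measure ℝ) (l : ℝ) : ℝ :=
  (V (Ioc 0 l)).toReal

/-- The mixing time `T_V(ε) = min{t ≥ 0 : 𝓛_V(t) ≤ ε}`. -/
noncomputable def TmixV (V : Measure ℝ) (ε : ℝ) : ℝ :=
  sInf {t : ℝ | 0 ≤ t ∧ lap V t ≤ ε}

/-- `λ_V(c) = inf{λ > 0 : V(λ) > c}`. -/
noncomputable def lamV (V : Measure ℝ) (c : ℝ) : ℝ :=
  sInf {l : ℝ | 0 < l ∧ c < cdfV V l}

/-- `τ_V(c) = sup_{λ ≥ λ_V(c)} log(1 + V(λ))/λ`. -/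
noncomputable def tauV (V : Measure ℝ) (c : ℝ) : ℝ :=
  sSup ((fun l => Real.log (1 + cdfV V l) / l) '' Ici (lamV V c))

/-- `t` is a cutoff time for the sequence of Laplace transforms `(𝓛_{V_n})` (in the regime
`𝓛_{V_n}(0) → ∞`): `𝓛_{V_n}(a t_n) → 0` for `a > 1` and `𝓛_{V_n}(a t_n) → ∞` for `0 < a < 1`. -/
def IsLapCutoffTime (V : ℕ → Measure ℝ) (t : ℕ → ℝ) : Prop :=
  (∀ᶠ n in atTop, 0 < t n) ∧
    (∀ a : ℝ, 1 < a → Tendsto (fun n => lap (V n) (a * t n)) atTop (𝓝 0)) ∧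
    (∀ a : ℝ, a ∈ Ioo (0 : ℝ) 1 → Tendsto (fun n => lap (V n) (a * t n)) atTop atTop)

/-- The sequence of Laplace transforms `(𝓛_{V_n})` has a cutoff. -/
def LapCutoff (V : ℕ → Measure ℝ) : Prop :=
  ∃ t : ℕ → ℝ, IsLapCutoffTime V t

/-!
Lower bound: if `𝓛_V(t) ≤ δ`, then `e^{-tλ} V(λ) ≤ δ` for every `λ`; for `λ ≥ λ_V(2δ)` we also have
`V(λ) ≥ 2δ` (right-continuity of `V`), which forces `e^{tλ} ≥ 2` and hence `1 + V(λ) ≤ e^{tλ}`.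

Upper bound: by Tonelli, `𝓛_V(t) = t ∫₀^∞ e^{-ts} V(s) ds`. With `τ = τ_V(δ/2)` and `λ = λ_V(δ/2)`
we have `V(s) ≤ δ/2` for `s < λ` and `V(s) ≤ e^{τs}` for `s ≥ λ`, so
`𝓛_V(t) ≤ δ/2 + t/(t-τ) · e^{-(t-τ)λ}`. At `t = 6τ/δ²` the second term is at most `δ/2`
because `τλ ≥ log(1 + δ/2)`.
-/

open Real

section CdfV

variable (V : Measure ℝ)

lemma cdfV_nonneg (l : ℝ) : 0 ≤ cdfV V l := measureReal_nonneg

lemma monotone_cdfV [IsFiniteMeasure V] : Monotone (cdfV V) := fun _ _ h =>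
  measureReal_mono (Ioc_subset_Ioc_right h)

lemma cdfV_le_measureReal_Ioi [IsFiniteMeasure V] (l : ℝ) : cdfV V l ≤ V.real (Ioi 0) :=
  measureReal_mono Ioc_subset_Ioi_self

lemma cdfV_of_nonpos {l : ℝ} (hl : l ≤ 0) : cdfV V l = 0 := by
  simp [cdfV, Ioc_eq_empty_of_le hl]

lemma continuousWithinAt_Ioi_cdfV [IsFiniteMeasure V] (a : ℝ) :
    ContinuousWithinAt (cdfV V) (Ioi a) a := by
  have hinter : ⋂ r > a, Ioc (0 : ℝ) r = Ioc 0 a := by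
    ext x
    simp only [mem_iInter, mem_Ioc]
    exact ⟨fun h => ⟨(h (a + 1) (by linarith)).1,
        le_of_forall_gt_imp_ge_of_dense fun r hr => (h r hr).2⟩,
      fun h r hr => ⟨h.1, h.2.trans hr.le⟩⟩
  have h := tendsto_measure_biInter_gt (μ := V) (s := fun r => Ioc (0 : ℝ) r)
    (fun _ _ => measurableSet_Ioc.nullMeasurableSet) (fun _ _ _ hij => Ioc_subset_Ioc_right hij)
    ⟨a + 1, by linarith, measure_ne_top V _⟩
  rw [hinter] at h
  exact (ENNReal.tendsto_toReal (measure_ne_top V _)).comp h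

lemma tendsto_cdfV_atTop [IsFiniteMeasure V] : Tendsto (cdfV V) atTop (𝓝 (V.real (Ioi 0))) := by
  have h := tendsto_measure_iUnion_atTop (μ := V) (s := fun r => Ioc (0 : ℝ) r)
    fun _ _ h => Ioc_subset_Ioc_right h
  rw [iUnion_Ioc_right] at h
  exact (ENNReal.tendsto_toReal (measure_ne_top V _)).comp h

end CdfV

section Lap

variable (V : Measure ℝ)

lemma lap_zero : lap V 0 = V.real (Ioi 0) := by
  simp [lap]

lemma integrableOn_exp_neg_mul [IsFiniteMeasure V] {t : ℝ} (ht : 0 ≤ t) :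
    IntegrableOn (fun x => exp (-t * x)) (Ioi 0) V := by
  refine Integrable.of_bound (by fun_prop) 1 ?_
  filter_upwards [ae_restrict_mem measurableSet_Ioi] with x (hx : 0 < x)
  rw [Real.norm_of_nonneg (Real.exp_pos _).le, Real.exp_le_one_iff]
  nlinarith

lemma exp_neg_mul_mul_cdfV_le_lap [IsFiniteMeasure V] {t : ℝ} (ht : 0 ≤ t) (l : ℝ) :
    exp (-t * l) * cdfV V l ≤ lap V t := by
  have hint := integrableOn_exp_neg_mul V ht
  calc exp (-t * l) * cdfV V l = ∫ _ in Ioc 0 l, exp (-t * l) ∂V := by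
        rw [setIntegral_const, smul_eq_mul, mul_comm, cdfV, measureReal_def]
    _ ≤ ∫ x in Ioc 0 l, exp (-t * x) ∂V :=
        setIntegral_mono_on (integrable_const _).integrableOn (hint.mono_set Ioc_subset_Ioi_self)
          measurableSet_Ioc fun x hx => Real.exp_le_exp.2 (by nlinarith [hx.2])
    _ ≤ lap V t := setIntegral_mono_set hint (Eventually.of_forall fun _ => (Real.exp_pos _).le)
          Ioc_subset_Ioi_self.eventuallyLE

end Lap

section LamTau

variable {V : Measure ℝ} {c : ℝ}

lemma cdfV_le_of_lt_lamV (hc : 0 ≤ c) {l : ℝ} (hl : l < lamV V c) : cdfV V l ≤ c := by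
  rcases le_or_gt l 0 with hl0 | hl0
  · exact (cdfV_of_nonpos V hl0).trans_le hc
  · by_contra h
    have hmem : l ∈ {l : ℝ | 0 < l ∧ c < cdfV V l} := ⟨hl0, not_le.1 h⟩
    exact (csInf_le ⟨0, fun _ h => h.1.le⟩ hmem).not_gt hl

variable [IsFiniteMeasure V]

lemma exists_lt_cdfV (hc : c < V.real (Ioi 0)) : ∃ l, 0 < l ∧ c < cdfV V l :=
  (((tendsto_cdfV_atTop V).eventually (lt_mem_nhds hc)).and (eventually_gt_atTop 0)).exists.imp
    fun _ h => ⟨h.2, h.1⟩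

lemma lt_cdfV_of_lamV_lt (hc : c < V.real (Ioi 0)) {l : ℝ} (hl : lamV V c < l) :
    c < cdfV V l := by
  obtain ⟨l', hl', hl'l⟩ := exists_lt_of_csInf_lt (exists_lt_cdfV hc) hl
  exact hl'.2.trans_le (monotone_cdfV V hl'l.le)

lemma le_cdfV_of_lamV_le (hc : c < V.real (Ioi 0)) {l : ℝ} (hl : lamV V c ≤ l) :
    c ≤ cdfV V l := by
  have hlam : c ≤ cdfV V (lamV V c) :=
    ge_of_tendsto (continuousWithinAt_Ioi_cdfV V _)
      (eventually_nhdsWithin_of_forall fun _ hl => (lt_cdfV_of_lamV_lt hc hl).le)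
  exact hlam.trans (monotone_cdfV V hl)

lemma lamV_pos (hc0 : 0 < c) (hc : c < V.real (Ioi 0)) : 0 < lamV V c := by
  have hcdf0 : cdfV V 0 < c := by rwa [cdfV_of_nonpos V le_rfl]
  obtain ⟨l₀, hl₀c, hl₀⟩ := (((continuousWithinAt_Ioi_cdfV V 0).eventually
    (gt_mem_nhds hcdf0)).and self_mem_nhdsWithin).exists
  exact hl₀.trans_le <| le_csInf (exists_lt_cdfV hc) fun l hl =>
    ((monotone_cdfV V).reflect_lt (hl₀c.trans hl.2)).le

lemma log_one_add_cdfV_le_tauV_mul (hlam : 0 < lamV V c) {l : ℝ} (hl : lamV V c ≤ l) :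
    log (1 + cdfV V l) ≤ tauV V c * l := by
  have hbdd : BddAbove ((fun l => log (1 + cdfV V l) / l) '' Ici (lamV V c)) := by
    refine ⟨log (1 + V.real (Ioi 0)) / lamV V c, ?_⟩
    rintro _ ⟨l, hl, rfl⟩
    exact div_le_div₀ (Real.log_nonneg (by linarith [measureReal_nonneg (μ := V) (s := Ioi 0)]))
      (Real.log_le_log (by linarith [cdfV_nonneg V l]) (by linarith [cdfV_le_measureReal_Ioi V l]))
      hlam hl
  exact (div_le_iff₀ (hlam.trans_le hl)).1 (le_csSup hbdd ⟨l, hl, rfl⟩)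

lemma log_one_add_le_tauV_mul_lamV (hc0 : 0 < c) (hc : c < V.real (Ioi 0)) :
    log (1 + c) ≤ tauV V c * lamV V c :=
  (Real.log_le_log (by linarith) (by linarith [le_cdfV_of_lamV_le hc le_rfl])).trans
    (log_one_add_cdfV_le_tauV_mul (lamV_pos hc0 hc) le_rfl)

lemma tauV_pos (hc0 : 0 < c) (hc : c < V.real (Ioi 0)) : 0 < tauV V c :=
  (mul_pos_iff_of_pos_right (lamV_pos hc0 hc)).1 <|
    (Real.log_pos (by linarith)).trans_le (log_one_add_le_tauV_mul_lamV hc0 hc)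

lemma tauV_le_of_lap_le {δ t : ℝ} (hδ : 0 < δ) (hδ1 : δ ≤ 1 / 2) (hδV : 2 * δ < V.real (Ioi 0))
    (ht : 0 ≤ t) (hlap : lap V t ≤ δ) : tauV V (2 * δ) ≤ t := by
  have hlam := lamV_pos (by positivity) hδV
  refine csSup_le (nonempty_Ici.image _) ?_
  rintro _ ⟨l, hl, rfl⟩
  have hcdf : 2 * δ ≤ cdfV V l := le_cdfV_of_lamV_le hδV hl
  have hE : 0 < exp (t * l) := Real.exp_pos _
  have hcdf_le : cdfV V l ≤ δ * exp (t * l) := by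
    have h := (exp_neg_mul_mul_cdfV_le_lap V ht l).trans hlap
    rwa [neg_mul, Real.exp_neg, inv_mul_le_iff₀ hE, mul_comm] at h
  have hE2 : 2 ≤ exp (t * l) := by nlinarith
  rw [div_le_iff₀ (hlam.trans_le hl), Real.log_le_iff_le_exp (by linarith)]
  nlinarith

end LamTau

section LaplaceStieltjes

variable {V : Measure ℝ} [IsFiniteMeasure V] {t : ℝ}

lemma lintegral_Ioi_ofReal_exp_neg_mul (ht : 0 < t) (x : ℝ) :
    ∫⁻ s in Ioi x, ENNReal.ofReal (exp (-t * s)) = ENNReal.ofReal (exp (-t * x) / t) := by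
  rw [← ofReal_integral_eq_lintegral_ofReal (integrableOn_exp_mul_Ioi (neg_neg_of_pos ht) x)
    (ae_of_all _ fun _ => (Real.exp_pos _).le), integral_exp_mul_Ioi (neg_neg_of_pos ht),
    neg_div_neg_eq]

lemma ofReal_lap_eq_mul_lintegral (ht : 0 < t) :
    ENNReal.ofReal (lap V t) =
      ENNReal.ofReal t * ∫⁻ s in Ioi 0, ENNReal.ofReal (exp (-t * s)) * V (Ioc 0 s) := by
  set g : ℝ → ENNReal := fun s => ENNReal.ofReal (exp (-t * s))
  have hexp : ∀ x ∈ Ioi (0 : ℝ),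
      ENNReal.ofReal (exp (-t * x)) = ENNReal.ofReal t * ∫⁻ s in Ioi 0, (Ici x).indicator g s := by
    intro x hx
    rw [lintegral_indicator measurableSet_Ici, Measure.restrict_restrict measurableSet_Ici,
      inter_eq_left.2 (Ici_subset_Ioi.2 hx), Measure.restrict_congr_set Ioi_ae_eq_Ici.symm,
      lintegral_Ioi_ofReal_exp_neg_mul ht, ← ENNReal.ofReal_mul ht.le, mul_div_cancel₀ _ ht.ne']
  have hV : ∀ s, ∫⁻ x in Ioi 0, (Ici x).indicator g s ∂V = g s * V (Ioc 0 s) := by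
    intro s
    have h : ∀ x, (Ici x).indicator g s = (Iic s).indicator (fun _ => g s) x := by
      intro x
      by_cases hxs : x ≤ s <;> simp [hxs]
    simp_rw [h]
    rw [lintegral_indicator_const measurableSet_Iic, Measure.restrict_apply measurableSet_Iic,
      Iic_inter_Ioi]
  have hmeas : Measurable (Function.uncurry fun x s => (Ici x).indicator g s) := by
    have h : (Function.uncurry fun x s => (Ici x).indicator g s) =
        {p : ℝ × ℝ | p.1 ≤ p.2}.indicator (g ∘ Prod.snd) := by
      ext ⟨x, s⟩
      simp [indicator_apply]
    rw [h]
    exact (by fun_prop : Measurable (g ∘ Prod.snd)).indicator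
      (measurableSet_le measurable_fst measurable_snd)
  calc ENNReal.ofReal (lap V t) = ∫⁻ x in Ioi 0, ENNReal.ofReal (exp (-t * x)) ∂V :=
        ofReal_integral_eq_lintegral_ofReal (integrableOn_exp_neg_mul V ht.le)
          (ae_of_all _ fun _ => (Real.exp_pos _).le)
    _ = ∫⁻ x in Ioi 0, ENNReal.ofReal t * (∫⁻ s in Ioi 0, (Ici x).indicator g s) ∂V :=
        setLIntegral_congr_fun measurableSet_Ioi hexp
    _ = ENNReal.ofReal t * ∫⁻ s in Ioi 0, ∫⁻ x in Ioi 0, (Ici x).indicator g s ∂V := by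
        rw [lintegral_const_mul' _ _ ENNReal.ofReal_ne_top,
          lintegral_lintegral_swap hmeas.aemeasurable]
    _ = _ := by simp_rw [hV, g]

lemma ofReal_exp_mul_measure_Ioc_le {τ c l₀ s : ℝ}
    (hc : 0 ≤ c) (hs : cdfV V s ≤ c + (Ici l₀).indicator (fun s => exp (τ * s)) s) :
    ENNReal.ofReal (exp (-t * s)) * V (Ioc 0 s) ≤
      ENNReal.ofReal c * ENNReal.ofReal (exp (-t * s)) +
        (Ici l₀).indicator (fun s => ENNReal.ofReal (exp (-(t - τ) * s))) s := by
  have hV : V (Ioc 0 s) = ENNReal.ofReal (cdfV V s) :=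
    (ENNReal.ofReal_toReal (measure_ne_top V _)).symm
  have hE := (Real.exp_pos (-t * s)).le
  by_cases hl : s ∈ Ici l₀
  · rw [indicator_of_mem hl] at hs ⊢
    have hsplit : exp (-t * s) * (c + exp (τ * s)) =
        c * exp (-t * s) + exp (-(t - τ) * s) := by
      rw [mul_add, ← Real.exp_add]
      ring_nf
    calc ENNReal.ofReal (exp (-t * s)) * V (Ioc 0 s)
        ≤ ENNReal.ofReal (exp (-t * s) * (c + exp (τ * s))) := by
          rw [hV, ← ENNReal.ofReal_mul hE]
          exact ENNReal.ofReal_le_ofReal (mul_le_mul_of_nonneg_left hs hE)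
      _ = _ := by
          rw [hsplit, ENNReal.ofReal_add (by positivity) (Real.exp_pos _).le, ENNReal.ofReal_mul hc]
  · rw [indicator_of_notMem hl, add_zero] at hs ⊢
    rw [hV, mul_comm, ← ENNReal.ofReal_mul (cdfV_nonneg V s), ← ENNReal.ofReal_mul hc]
    exact ENNReal.ofReal_le_ofReal (mul_le_mul_of_nonneg_right hs hE)

lemma lap_le_of_cdfV_le {τ c l₀ : ℝ} (ht : 0 < t) (hτt : τ < t) (hc : 0 ≤ c)
    (hcdf : ∀ s > 0, cdfV V s ≤ c + (Ici l₀).indicator (fun s => exp (τ * s)) s) :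
    lap V t ≤ c + t / (t - τ) * exp (-(t - τ) * l₀) := by
  have htτ : 0 < t - τ := sub_pos.2 hτt
  set e : ℝ → ENNReal := fun s => ENNReal.ofReal (exp (-t * s))
  set f : ℝ → ENNReal := fun s => ENNReal.ofReal (exp (-(t - τ) * s))
  suffices ENNReal.ofReal (lap V t) ≤
      ENNReal.ofReal (c + t / (t - τ) * exp (-(t - τ) * l₀)) from
    (ENNReal.ofReal_le_ofReal_iff (by positivity)).1 this
  calc ENNReal.ofReal (lap V t)
      = ENNReal.ofReal t * ∫⁻ s in Ioi 0, e s * V (Ioc 0 s) := ofReal_lap_eq_mul_lintegral ht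
    _ ≤ ENNReal.ofReal t * ∫⁻ s in Ioi 0, (ENNReal.ofReal c * e s + (Ici l₀).indicator f s) := by
        gcongr ENNReal.ofReal t * ?_
        exact setLIntegral_mono ((by fun_prop : Measurable fun s => ENNReal.ofReal c * e s).add
          ((by fun_prop : Measurable f).indicator measurableSet_Ici))
          fun s hs => ofReal_exp_mul_measure_Ioc_le hc (hcdf s hs)
    _ ≤ ENNReal.ofReal t * (ENNReal.ofReal c * (∫⁻ s in Ioi 0, e s) + ∫⁻ s in Ici l₀, f s) := by
        rw [lintegral_add_left (by fun_prop), lintegral_const_mul _ (by fun_prop),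
          lintegral_indicator measurableSet_Ici, Measure.restrict_restrict measurableSet_Ici]
        gcongr ENNReal.ofReal t * (_ + ?_)
        exact lintegral_mono_set inter_subset_left
    _ = ENNReal.ofReal (c + t / (t - τ) * exp (-(t - τ) * l₀)) := by
        simp only [e, f]
        rw [lintegral_Ioi_ofReal_exp_neg_mul ht, ← Measure.restrict_congr_set Ioi_ae_eq_Ici,
          lintegral_Ioi_ofReal_exp_neg_mul htτ, mul_zero, Real.exp_zero, ← ENNReal.ofReal_mul hc,
          ← ENNReal.ofReal_add (by positivity) (by positivity), ← ENNReal.ofReal_mul ht.le]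
        congr 1
        field_simp

end LaplaceStieltjes

lemma div_sub_one_mul_exp_le {δ y : ℝ} (hδ : 0 < δ) (hδ1 : δ ≤ 1 / 2)
    (hy : log (1 + δ / 2) ≤ y) :
    6 / δ ^ 2 / (6 / δ ^ 2 - 1) * exp (-(6 / δ ^ 2 - 1) * y) ≤ δ / 2 := by
  set m := 6 / δ ^ 2 - 1 with hm_def
  have hm : δ ^ 2 * m = 6 - δ ^ 2 := by rw [hm_def]; field_simp
  have hm23 : 23 ≤ m := by
    rw [hm_def, le_sub_iff_add_le, le_div_iff₀ (by positivity)]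
    nlinarith
  have hy' : 2 * δ ≤ (δ + 4) * y := by
    have h := (Real.le_log_one_add_of_nonneg (by positivity : 0 ≤ δ / 2)).trans hy
    rw [div_le_iff₀ (by positivity)] at h
    linarith
  have hexp : exp (-(m * y)) * (1 + m * y) ≤ 1 := by
    calc exp (-(m * y)) * (1 + m * y) ≤ exp (-(m * y)) * exp (m * y) := by
          gcongr
          linarith [Real.add_one_le_exp (m * y)]
      _ = 1 := by rw [← Real.exp_add, neg_add_cancel, Real.exp_zero]
  have hmy : 0 < 1 + m * y := by nlinarith
  have hkey : 2 * (m + 1) ≤ δ * m * (1 + m * y) := by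
    nlinarith [mul_le_mul_of_nonneg_left hy' (by positivity : (0 : ℝ) ≤ δ * m * m)]
  have hk : 6 / δ ^ 2 = m + 1 := by rw [hm_def]; ring
  rw [hk, neg_mul, div_mul_eq_mul_div, div_le_iff₀ (by linarith)]
  have hE := Real.exp_pos (-(m * y))
  nlinarith

lemma lap_six_div_sq_mul_tauV_le {V : Measure ℝ} [IsFiniteMeasure V] {δ : ℝ} (hδ : 0 < δ)
    (hδ1 : δ ≤ 1 / 2) (hδV : δ / 2 < V.real (Ioi 0)) :
    lap V (6 / δ ^ 2 * tauV V (δ / 2)) ≤ δ := by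
  have hc : 0 < δ / 2 := by positivity
  set τ := tauV V (δ / 2)
  set lam := lamV V (δ / 2)
  have hτ : 0 < τ := tauV_pos hc hδV
  have hk : 1 < 6 / δ ^ 2 := by
    rw [lt_div_iff₀ (by positivity)]
    nlinarith
  have hcdf : ∀ s > 0, cdfV V s ≤ δ / 2 + (Ici lam).indicator (fun s => exp (τ * s)) s := by
    intro s _
    by_cases hs : s ∈ Ici lam
    · rw [indicator_of_mem hs]
      have h := log_one_add_cdfV_le_tauV_mul (lamV_pos hc hδV) (mem_Ici.1 hs)
      rw [Real.log_le_iff_le_exp (by linarith [cdfV_nonneg V s])] at h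
      linarith
    · rw [indicator_of_notMem hs]
      linarith [cdfV_le_of_lt_lamV hc.le (not_le.1 (mt mem_Ici.2 hs))]
  calc lap V (6 / δ ^ 2 * τ)
      ≤ δ / 2 + 6 / δ ^ 2 * τ / (6 / δ ^ 2 * τ - τ) * exp (-(6 / δ ^ 2 * τ - τ) * lam) :=
        lap_le_of_cdfV_le (by positivity) (by nlinarith) hc.le hcdf
    _ = δ / 2 + 6 / δ ^ 2 / (6 / δ ^ 2 - 1) * exp (-(6 / δ ^ 2 - 1) * (τ * lam)) := by
        rw [← sub_one_mul, mul_div_mul_right _ _ hτ.ne', neg_mul, neg_mul, mul_assoc]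
    _ ≤ δ := by
        linarith [div_sub_one_mul_exp_le hδ hδ1 (log_one_add_le_tauV_mul_lamV hc hδV)]

theorem stmt_10_general (V : Measure ℝ) [IsFiniteMeasure V]
    (δ : ℝ) (hδ : 0 < δ) (hδlt : δ < min (lap V 0) 1 / 2) :
    tauV V (2 * δ) ≤ TmixV V δ ∧ TmixV V δ ≤ 6 / δ ^ 2 * tauV V (δ / 2) := by
  have hδ1 : δ ≤ 1 / 2 := by linarith [min_le_right (lap V 0) 1]
  have hδV : 2 * δ < V.real (Ioi 0) := by
    rw [← lap_zero]
    linarith [min_le_left (lap V 0) 1]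
  have hmem : 6 / δ ^ 2 * tauV V (δ / 2) ∈ {t | 0 ≤ t ∧ lap V t ≤ δ} :=
    ⟨(mul_pos (by positivity) (tauV_pos (by positivity) (by linarith))).le,
      lap_six_div_sq_mul_tauV_le hδ hδ1 (by linarith)⟩
  exact ⟨le_csInf ⟨_, hmem⟩ fun t ht => tauV_le_of_lap_le hδ hδ1 hδV ht.1 ht.2,
    csInf_le ⟨0, fun _ ht => ht.1⟩ hmem⟩

theorem stmt_10 (V : Measure ℝ) [IsFiniteMeasure V] (hsupp : V (Iic 0) = 0)
    (δ : ℝ) (hδ : 0 < δ) (hδlt : δ < min (lap V 0) 1 / 2) :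
    tauV V (2 * δ) ≤ TmixV V δ ∧ TmixV V δ ≤ 6 / δ ^ 2 * tauV V (δ / 2) :=
  stmt_10_general V δ hδ hδlt
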